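/- arXiv:math/0006064 — 3 statements merged into one kernel-verified Lean document; each statement's English description precedes it below -/
import Mathlib

section
/- Let θ₀ satisfy 0 < θ₀ < π, let S = {ξ ∈ ℂ : ξ ≠ 0 and |arg ξ| < θ₀}, let q : ℂ → ℂ be holomorphic on S with |q(ξ)| ≤ k(1+|ξ|)^(−γ) on S for some constants γ > 1, k > 0. Let z ∈ ℂ with Im z > 0 and define functions uₙ, vₙ on S by u₀ ≡ 1, v₀ ≡ 0 and, for n ≥ 1, uₙ(ξ) = (i/(2z)) ∫₀^∞ q(ξ+s)·(uₙ₋₁+vₙ₋₁)(ξ+s) ds and vₙ(ξ) = −(i/(2z)) ∫₀^∞ q(ξ+s)·e^{2isz}·(uₙ₋₁+vₙ₋₁)(ξ+s) ds. Then for every n ≥ 0 the functions uₙ and vₙ are holomorphic functions of ξ on S. -/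
/-!
Adding `s ≥ 0` to a point of the sector only moves its argument towards `0`, so the sector is
invariant under these translations. Inductively `uₙ + vₙ` is holomorphic and bounded, so for `ξ`
near a fixed point of the sector the integrands `q(ξ+s)(uₙ+vₙ)(ξ+s)` (times `e^{2isz}`, of modulus
at most `1`) are dominated by a multiple of `(1+s)^(-γ)`. By Cauchy's estimate on discs of fixed
radius the same holds for their `ξ`-derivatives, so one may differentiate under the integral
sign; the integrability of `(1+|t|)^(-γ)` on `ℝ` also gives a bound on `uₙ₊₁ + vₙ₊₁` uniform on
the sector.
-/

open Complex MeasureTheory Real Set Metric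

theorem re_mul_norm_add_ofReal_le (ξ : ℂ) {s : ℝ} (hs : 0 ≤ s) :
    ξ.re * ‖ξ + s‖ ≤ (ξ + s).re * ‖ξ‖ := by
  have h₁ : ‖ξ + s‖ ≤ ‖ξ‖ + s := by simpa [abs_of_nonneg hs] using norm_add_le ξ (s : ℂ)
  have h₂ : ‖ξ‖ ≤ ‖ξ + s‖ + s := by
    simpa [abs_of_nonneg hs] using norm_sub_le (ξ + s) (s : ℂ)
  have h₃ := abs_re_le_norm ξ
  have h₄ := abs_re_le_norm (ξ + s)
  simp only [add_re, ofReal_re] at h₄ ⊢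
  obtain ⟨h₃l, h₃r⟩ := abs_le.1 h₃
  obtain ⟨h₄l, h₄r⟩ := abs_le.1 h₄
  rcases le_total 0 ξ.re with ha | ha <;> rcases le_total 0 (ξ.re + s) with hb | hb <;>
    nlinarith [norm_nonneg ξ, norm_nonneg (ξ + s)]

theorem abs_arg_eq_arccos {w : ℂ} (hw : w ≠ 0) : |w.arg| = Real.arccos (w.re / ‖w‖) := by
  rw [← cos_arg hw, ← Real.cos_abs, Real.arccos_cos (abs_nonneg _) (abs_arg_le_pi w)]

theorem abs_arg_add_ofReal_le {ξ : ℂ} (hξ : ξ ≠ 0) {s : ℝ} (hs : 0 ≤ s) (hξs : ξ + s ≠ 0) :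
    |(ξ + s).arg| ≤ |ξ.arg| := by
  rw [abs_arg_eq_arccos hξ, abs_arg_eq_arccos hξs]
  refine Real.arccos_le_arccos ?_
  rw [div_le_div_iff₀ (norm_pos_iff.2 hξ) (norm_pos_iff.2 hξs)]
  exact re_mul_norm_add_ofReal_le ξ hs

theorem add_ofReal_mem_slitPlane {ξ : ℂ} (hξ : ξ ∈ slitPlane) {s : ℝ} (hs : 0 ≤ s) :
    ξ + s ∈ slitPlane := by
  rw [mem_slitPlane_iff] at hξ ⊢
  simp only [add_re, ofReal_re, add_im, ofReal_im, add_zero]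
  rcases hξ with h | h
  · exact Or.inl (by linarith)
  · exact Or.inr h

def sector (θ : ℝ) : Set ℂ := {ξ | ξ ≠ 0 ∧ |ξ.arg| < θ}

theorem sector_eq_slitPlane_inter {θ : ℝ} (hθ : θ ≤ π) :
    sector θ = slitPlane ∩ (fun ξ => |ξ.arg|) ⁻¹' Iio θ := by
  ext ξ
  simp only [sector, mem_ofPred_eq, mem_inter_iff, mem_preimage, mem_Iio, mem_slitPlane_iff_arg]
  constructor
  · rintro ⟨h0, h⟩
    refine ⟨⟨fun hπ => ?_, h0⟩, h⟩
    rw [hπ, abs_of_pos pi_pos] at h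
    linarith
  · rintro ⟨⟨-, h0⟩, h⟩
    exact ⟨h0, h⟩

theorem isOpen_sector {θ : ℝ} (hθ : θ ≤ π) : IsOpen (sector θ) := by
  rw [sector_eq_slitPlane_inter hθ]
  exact continuousOn_arg.abs.isOpen_inter_preimage isOpen_slitPlane isOpen_Iio

theorem add_ofReal_mem_sector {θ : ℝ} (hθ : θ ≤ π) {ξ : ℂ} (hξ : ξ ∈ sector θ) {s : ℝ}
    (hs : 0 ≤ s) : ξ + s ∈ sector θ := by
  rw [sector_eq_slitPlane_inter hθ] at hξ ⊢
  have hξs := add_ofReal_mem_slitPlane hξ.1 hs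
  exact ⟨hξs,
    (abs_arg_add_ofReal_le (slitPlane_ne_zero hξ.1) hs (slitPlane_ne_zero hξs)).trans_lt hξ.2⟩

theorem one_add_rpow_neg_le {γ a s x : ℝ} (hγ : 0 ≤ γ) (ha : 0 ≤ a) (hs : 0 ≤ s) (hx : 0 ≤ x)
    (hsx : s ≤ x + a) : (1 + x) ^ (-γ) ≤ (1 + a) ^ γ * (1 + s) ^ (-γ) := by
  rw [rpow_neg (by linarith), rpow_neg (by linarith), ← div_eq_mul_inv,
    le_div_iff₀ (rpow_pos_of_pos (by linarith) _),
    inv_mul_le_iff₀ (rpow_pos_of_pos (by linarith) _), ← mul_rpow (by linarith) (by linarith)]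
  exact rpow_le_rpow (by linarith) (by nlinarith) hγ

theorem closedBall_add_subset_ball {ξ x c : ℂ} {ε : ℝ} (hx : x ∈ ball ξ ε) :
    closedBall (x + c) ε ⊆ ball (ξ + c) (2 * ε) := by
  intro w hw
  rw [mem_ball] at hx ⊢
  rw [mem_closedBall] at hw
  calc dist w (ξ + c) ≤ dist w (x + c) + dist (x + c) (ξ + c) := dist_triangle _ _ _
    _ < ε + ε := by rw [dist_add_right]; exact add_lt_add_of_le_of_lt hw hx
    _ = 2 * ε := by ring

theorem differentiableAt_integral_Ioi_comp_add_mul {f : ℂ → ℂ} {g : ℝ → ℂ} {ξ : ℂ} {ε : ℝ}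
    {B : ℝ → ℝ} (hε : 0 < ε)
    (hf : ∀ s : ℝ, 0 < s → DifferentiableOn ℂ f (ball (ξ + s) (2 * ε)))
    (hfB : ∀ s : ℝ, 0 < s → ∀ w ∈ ball (ξ + s) (2 * ε), ‖f w‖ ≤ B s)
    (hB : IntegrableOn B (Ioi 0)) (hg : AEStronglyMeasurable g (volume.restrict (Ioi 0)))
    (hg₁ : ∀ s : ℝ, 0 < s → ‖g s‖ ≤ 1) :
    DifferentiableAt ℂ (fun ζ => ∫ s in Ioi (0 : ℝ), f (ζ + s) * g s) ξ := by
  have hmem : ∀ x ∈ ball ξ ε, ∀ s : ℝ, x + s ∈ ball (ξ + s) (2 * ε) := fun x hx s =>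
    closedBall_add_subset_ball hx (mem_closedBall_self hε.le)
  have hfx : ∀ x ∈ ball ξ ε, ∀ s : ℝ, 0 < s → DifferentiableAt ℂ f (x + s) := fun x hx s hs =>
    (hf s hs).differentiableAt (isOpen_ball.mem_nhds (hmem x hx s))
  have hmeas : ∀ x ∈ ball ξ ε,
      AEStronglyMeasurable (fun s : ℝ => f (x + s) * g s) (volume.restrict (Ioi 0)) := by
    intro x hx
    refine ContinuousOn.aestronglyMeasurable (fun s hs => ?_) measurableSet_Ioi |>.mul hg
    exact (ContinuousAt.comp (g := f) (f := fun t : ℝ => x + t) (hfx x hx s hs).continuousAt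
      (by fun_prop)).continuousWithinAt
  have hderiv_le : ∀ x ∈ ball ξ ε, ∀ s : ℝ, 0 < s → ‖deriv f (x + s)‖ ≤ B s / ε :=
    fun x hx s hs => norm_deriv_le_of_forall_mem_sphere_norm_le hε
      ((hf s hs).diffContOnCl_ball (closedBall_add_subset_ball hx))
      fun w hw => hfB s hs w (closedBall_add_subset_ball hx (sphere_subset_closedBall hw))
  have key := hasDerivAt_integral_of_dominated_loc_of_deriv_le
    (μ := volume.restrict (Ioi (0 : ℝ))) (F := fun (x : ℂ) (s : ℝ) => f (x + s) * g s)
    (F' := fun (x : ℂ) (s : ℝ) => deriv f (x + s) * g s) (bound := fun s => B s / ε)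
    (ball_mem_nhds ξ hε) (Filter.eventually_of_mem (ball_mem_nhds ξ hε) hmeas)
    (hB.mono' (hmeas ξ (mem_ball_self hε)) <| (ae_restrict_iff' measurableSet_Ioi).2 <|
      .of_forall fun s hs => by
        simpa [norm_mul] using mul_le_mul (hfB s hs _ (hmem ξ (mem_ball_self hε) s)) (hg₁ s hs)
          (norm_nonneg _) ((norm_nonneg _).trans (hfB s hs _ (hmem ξ (mem_ball_self hε) s))))
    (((measurable_deriv f).comp (by fun_prop)).aestronglyMeasurable.mul hg)
    ((ae_restrict_iff' measurableSet_Ioi).2 <| .of_forall fun s hs x hx => by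
      simpa [norm_mul] using mul_le_mul (hderiv_le x hx s hs) (hg₁ s hs) (norm_nonneg _)
        ((norm_nonneg _).trans (hderiv_le x hx s hs)))
    (hB.div_const ε)
    ((ae_restrict_iff' measurableSet_Ioi).2 <| .of_forall fun s hs x hx =>
      ((hfx x hx s hs).hasDerivAt.comp_add_const x (s : ℂ)).mul_const (g s))
  exact key.2.differentiableAt

section TranslationIntegral

variable {S : Set ℂ} {f : ℂ → ℂ} {g : ℝ → ℂ} {C γ : ℝ}

theorem nonneg_of_norm_le_mul_one_add_rpow {ξ : ℂ} (hξ : ‖f ξ‖ ≤ C * (1 + ‖ξ‖) ^ (-γ)) :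
    0 ≤ C :=
  (mul_nonneg_iff_of_pos_right (rpow_pos_of_pos (by positivity) _)).1 ((norm_nonneg _).trans hξ)

theorem differentiableOn_integral_Ioi_comp_add_mul (hS : IsOpen S)
    (hSadd : ∀ ξ ∈ S, ∀ s : ℝ, 0 ≤ s → ξ + s ∈ S) (hf : DifferentiableOn ℂ f S) (hγ : 1 < γ)
    (hfC : ∀ w ∈ S, ‖f w‖ ≤ C * (1 + ‖w‖) ^ (-γ))
    (hg : AEStronglyMeasurable g (volume.restrict (Ioi 0))) (hg₁ : ∀ s : ℝ, 0 < s → ‖g s‖ ≤ 1) :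
    DifferentiableOn ℂ (fun ξ => ∫ s in Ioi (0 : ℝ), f (ξ + s) * g s) S := by
  intro ξ hξ
  obtain ⟨r, hr, hball⟩ := Metric.isOpen_iff.1 hS ξ hξ
  have hC := nonneg_of_norm_le_mul_one_add_rpow (hfC ξ hξ)
  have htube : ∀ s : ℝ, 0 < s → ball (ξ + s) (2 * (r / 2)) ⊆ S := fun s hs w hw => by
    rw [mul_div_cancel₀ _ two_ne_zero, mem_ball, ← dist_sub_right _ _ (s : ℂ),
      add_sub_cancel_right] at hw
    simpa using hSadd _ (hball hw) s hs.le
  have hbound : ∀ s : ℝ, 0 < s → ∀ w ∈ ball (ξ + s) (2 * (r / 2)),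
      ‖f w‖ ≤ C * (1 + (‖ξ‖ + r)) ^ γ * (1 + ‖s‖) ^ (-γ) := by
    intro s hs w hw
    have hsw : ‖s‖ ≤ ‖w‖ + (‖ξ‖ + r) := by
      rw [mul_div_cancel₀ _ two_ne_zero, mem_ball'] at hw
      calc ‖s‖ = dist (ξ + s) ξ := by rw [dist_self_add_left, norm_real]
        _ ≤ dist (ξ + s) w + dist w ξ := dist_triangle _ _ _
        _ ≤ r + (‖w‖ + ‖ξ‖) := add_le_add hw.le (dist_le_norm_add_norm _ _)
        _ = ‖w‖ + (‖ξ‖ + r) := by ring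
    rw [mul_assoc]
    exact (hfC w (htube s hs hw)).trans <| mul_le_mul_of_nonneg_left
      (one_add_rpow_neg_le (by linarith) (by positivity) (norm_nonneg _) (norm_nonneg _) hsw) hC
  have hint : IntegrableOn (fun s : ℝ => C * (1 + (‖ξ‖ + r)) ^ γ * (1 + ‖s‖) ^ (-γ)) (Ioi 0) :=
    ((integrable_one_add_norm (by simpa using hγ)).const_mul _).integrableOn
  exact (differentiableAt_integral_Ioi_comp_add_mul (half_pos hr)
    (fun s hs => hf.mono (htube s hs)) hbound hint hg hg₁).differentiableWithinAt

theorem norm_integral_Ioi_comp_add_mul_le (hSadd : ∀ ξ ∈ S, ∀ s : ℝ, 0 ≤ s → ξ + s ∈ S)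
    (hγ : 1 < γ) (hfC : ∀ w ∈ S, ‖f w‖ ≤ C * (1 + ‖w‖) ^ (-γ)) (hg₁ : ∀ s : ℝ, 0 < s → ‖g s‖ ≤ 1)
    {ξ : ℂ} (hξ : ξ ∈ S) :
    ‖∫ s in Ioi (0 : ℝ), f (ξ + s) * g s‖ ≤ C * ∫ t : ℝ, (1 + ‖t‖) ^ (-γ) := by
  have hC := nonneg_of_norm_le_mul_one_add_rpow (hfC ξ hξ)
  have hint : Integrable fun s : ℝ => C * (1 + ‖ξ.re + s‖) ^ (-γ) :=
    ((integrable_one_add_norm (by simpa using hγ)).comp_add_left ξ.re).const_mul C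
  have hpointwise : ∀ s : ℝ, 0 < s → ‖f (ξ + s) * g s‖ ≤ C * (1 + ‖ξ.re + s‖) ^ (-γ) := by
    intro s hs
    have hre : ‖ξ.re + s‖ ≤ ‖ξ + s‖ := by simpa using abs_re_le_norm (ξ + s)
    calc ‖f (ξ + s) * g s‖ ≤ ‖f (ξ + s)‖ := by
          simpa [norm_mul] using mul_le_of_le_one_right (norm_nonneg _) (hg₁ s hs)
      _ ≤ C * (1 + ‖ξ + s‖) ^ (-γ) := hfC _ (hSadd ξ hξ s hs.le)
      _ ≤ C * (1 + ‖ξ.re + s‖) ^ (-γ) := mul_le_mul_of_nonneg_left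
          (rpow_le_rpow_of_nonpos (by positivity) (by linarith) (by linarith)) hC
  calc ‖∫ s in Ioi (0 : ℝ), f (ξ + s) * g s‖
      ≤ ∫ s in Ioi (0 : ℝ), C * (1 + ‖ξ.re + s‖) ^ (-γ) :=
        norm_integral_le_of_norm_le hint.integrableOn
          ((ae_restrict_iff' measurableSet_Ioi).2 (.of_forall hpointwise))
    _ ≤ ∫ s : ℝ, C * (1 + ‖ξ.re + s‖) ^ (-γ) :=
        setIntegral_le_integral hint (.of_forall fun s => by positivity)
    _ = C * ∫ t : ℝ, (1 + ‖t‖) ^ (-γ) := by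
        rw [integral_const_mul, integral_add_left_eq_self (fun t : ℝ => (1 + ‖t‖) ^ (-γ))]

end TranslationIntegral

theorem norm_cexp_two_mul_I_mul_le_one {z : ℂ} (hz : 0 < z.im) {s : ℝ} (hs : 0 ≤ s) :
    ‖cexp (2 * I * s * z)‖ ≤ 1 := by
  rw [norm_exp, Real.exp_le_one_iff]
  simp only [mul_re, mul_im, re_ofNat, im_ofNat, I_re, I_im, ofReal_re, ofReal_im]
  nlinarith

theorem jost_step_differentiableOn_and_bounded {S : Set ℂ} {q u v u' v' : ℂ → ℂ} {γ k M : ℝ}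
    {z : ℂ} (hS : IsOpen S) (hSadd : ∀ ξ ∈ S, ∀ s : ℝ, 0 ≤ s → ξ + s ∈ S)
    (hq : DifferentiableOn ℂ q S) (hγ : 1 < γ) (hqbound : ∀ ξ ∈ S, ‖q ξ‖ ≤ k * (1 + ‖ξ‖) ^ (-γ))
    (hz : 0 < z.im) (hu : DifferentiableOn ℂ u S) (hv : DifferentiableOn ℂ v S)
    (hM : ∀ ξ ∈ S, ‖u ξ + v ξ‖ ≤ M)
    (hu' : ∀ ξ ∈ S, u' ξ = I / (2 * z) * ∫ s in Ioi (0 : ℝ), q (ξ + s) * (u (ξ + s) + v (ξ + s)))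
    (hv' : ∀ ξ ∈ S, v' ξ = -(I / (2 * z)) *
      ∫ s in Ioi (0 : ℝ), q (ξ + s) * cexp (2 * I * s * z) * (u (ξ + s) + v (ξ + s))) :
    DifferentiableOn ℂ u' S ∧ DifferentiableOn ℂ v' S ∧ ∃ M', ∀ ξ ∈ S, ‖u' ξ + v' ξ‖ ≤ M' := by
  set c := I / (2 * z)
  set I₀ := ∫ t : ℝ, (1 + ‖t‖) ^ (-γ)
  set f := fun w => q w * (u w + v w)
  have hf : DifferentiableOn ℂ f S := hq.mul (hu.add hv)
  have hfC : ∀ w ∈ S, ‖f w‖ ≤ k * M * (1 + ‖w‖) ^ (-γ) := fun w hw => by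
    rw [norm_mul, mul_right_comm]
    exact mul_le_mul (hqbound w hw) (hM w hw) (norm_nonneg _)
      ((norm_nonneg _).trans (hqbound w hw))
  have hone : ∀ s : ℝ, 0 < s → ‖(fun _ => 1 : ℝ → ℂ) s‖ ≤ 1 := fun _ _ => norm_one.le
  have hexp : AEStronglyMeasurable (fun s : ℝ => cexp (2 * I * s * z)) (volume.restrict (Ioi 0)) :=
    (by fun_prop : Continuous fun s : ℝ => cexp (2 * I * s * z)).aestronglyMeasurable
  have hexp₁ : ∀ s : ℝ, 0 < s → ‖cexp (2 * I * s * z)‖ ≤ 1 :=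
    fun s hs => norm_cexp_two_mul_I_mul_le_one hz hs.le
  have hu'' : ∀ ξ ∈ S, u' ξ = c * ∫ s in Ioi (0 : ℝ), f (ξ + s) * (fun _ => 1) s :=
    fun ξ hξ => by simp only [hu' ξ hξ, f, mul_one]
  have hv'' : ∀ ξ ∈ S, v' ξ = -c * ∫ s in Ioi (0 : ℝ), f (ξ + s) * cexp (2 * I * s * z) :=
    fun ξ hξ => by simp only [hv' ξ hξ, f, mul_right_comm]
  refine ⟨((differentiableOn_integral_Ioi_comp_add_mul hS hSadd hf hγ hfC
      aestronglyMeasurable_const hone).const_mul c).congr hu'',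
    ((differentiableOn_integral_Ioi_comp_add_mul hS hSadd hf hγ hfC hexp hexp₁).const_mul
      (-c)).congr hv'', 2 * (‖c‖ * (k * M * I₀)), fun ξ hξ => ?_⟩
  have hu₁ := norm_integral_Ioi_comp_add_mul_le hSadd hγ hfC hone hξ
  have hv₁ := norm_integral_Ioi_comp_add_mul_le hSadd hγ hfC hexp₁ hξ
  calc ‖u' ξ + v' ξ‖ ≤ ‖u' ξ‖ + ‖v' ξ‖ := norm_add_le _ _
    _ ≤ ‖c‖ * (k * M * I₀) + ‖c‖ * (k * M * I₀) := by
      rw [hu'' ξ hξ, hv'' ξ hξ, norm_mul, norm_mul, norm_neg]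
      gcongr
    _ = 2 * (‖c‖ * (k * M * I₀)) := by ring

theorem stmt_1_general
    (θ₀ γ k : ℝ) (hθ₀' : θ₀ < π)
    (S : Set ℂ) (hS : S = {ξ : ℂ | ξ ≠ 0 ∧ |ξ.arg| < θ₀})
    (q : ℂ → ℂ) (hq : DifferentiableOn ℂ q S)
    (hγ : 1 < γ)
    (hqbound : ∀ ξ ∈ S, ‖q ξ‖ ≤ k * (1 + ‖ξ‖) ^ (-γ))
    (z : ℂ) (hz : 0 < z.im)
    (u v : ℕ → ℂ → ℂ)
    (hu0 : ∀ ξ ∈ S, u 0 ξ = 1) (hv0 : ∀ ξ ∈ S, v 0 ξ = 0)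
    (hu : ∀ n : ℕ, ∀ ξ ∈ S, u (n + 1) ξ =
      (Complex.I / (2 * z)) *
        ∫ s in Ioi (0 : ℝ), q (ξ + s) * (u n (ξ + s) + v n (ξ + s)))
    (hv : ∀ n : ℕ, ∀ ξ ∈ S, v (n + 1) ξ =
      -(Complex.I / (2 * z)) *
        ∫ s in Ioi (0 : ℝ), q (ξ + s) * Complex.exp (2 * Complex.I * s * z) *
          (u n (ξ + s) + v n (ξ + s))) :
    ∀ n : ℕ, DifferentiableOn ℂ (u n) S ∧ DifferentiableOn ℂ (v n) S := by
  have hSo : IsOpen S := hS ▸ isOpen_sector hθ₀'.le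
  have hSadd : ∀ ξ ∈ S, ∀ s : ℝ, 0 ≤ s → ξ + s ∈ S :=
    hS ▸ fun ξ hξ s hs => add_ofReal_mem_sector hθ₀'.le hξ hs
  -- Boundedness of `u n + v n` is what makes `q * (u n + v n)` decay like `q`.
  have key : ∀ n, DifferentiableOn ℂ (u n) S ∧ DifferentiableOn ℂ (v n) S ∧
      ∃ M, ∀ ξ ∈ S, ‖u n ξ + v n ξ‖ ≤ M := by
    intro n
    induction n with
    | zero => exact ⟨(differentiableOn_const 1).congr hu0, (differentiableOn_const 0).congr hv0,
        1, fun ξ hξ => by simp [hu0 ξ hξ, hv0 ξ hξ]⟩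
    | succ n ih =>
      obtain ⟨hun, hvn, M, hM⟩ := ih
      exact jost_step_differentiableOn_and_bounded hSo hSadd hq hγ hqbound hz hun hvn hM
        (hu n) (hv n)
  exact fun n => ⟨(key n).1, (key n).2.1⟩

/-- Lemma 2.2, regularity part: each Jost iterate is holomorphic in `ξ` on the sector `S`. -/
theorem stmt_1
    (θ₀ γ k : ℝ) (hθ₀ : 0 < θ₀) (hθ₀' : θ₀ < π)
    (S : Set ℂ) (hS : S = {ξ : ℂ | ξ ≠ 0 ∧ |ξ.arg| < θ₀})
    (q : ℂ → ℂ) (hq : DifferentiableOn ℂ q S)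
    (hγ : 1 < γ) (hk : 0 < k)
    (hqbound : ∀ ξ ∈ S, ‖q ξ‖ ≤ k * (1 + ‖ξ‖) ^ (-γ))
    (z : ℂ) (hz : 0 < z.im)
    (u v : ℕ → ℂ → ℂ)
    (hu0 : ∀ ξ ∈ S, u 0 ξ = 1) (hv0 : ∀ ξ ∈ S, v 0 ξ = 0)
    (hu : ∀ n : ℕ, ∀ ξ ∈ S, u (n + 1) ξ =
      (Complex.I / (2 * z)) *
        ∫ s in Ioi (0 : ℝ), q (ξ + s) * (u n (ξ + s) + v n (ξ + s)))
    (hv : ∀ n : ℕ, ∀ ξ ∈ S, v (n + 1) ξ =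
      -(Complex.I / (2 * z)) *
        ∫ s in Ioi (0 : ℝ), q (ξ + s) * Complex.exp (2 * Complex.I * s * z) *
          (u n (ξ + s) + v n (ξ + s))) :
    ∀ n : ℕ, DifferentiableOn ℂ (u n) S ∧ DifferentiableOn ℂ (v n) S :=
  stmt_1_general θ₀ γ k hθ₀' S hS q hq hγ hqbound z hz u v hu0 hv0 hu hv
end

section
/- Let α ∈ (π/2, π), let θ ∈ (0, π/2), let r > 0 and put z = r·(cos θ − i·sin θ) (so that arg z = 2π − θ and Im z < 0). Then |cos α − i·z·sin α| ≤ ((1 + sin θ)/cos θ)·|cos α + i·z·sin α|. -/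
open Complex Real

/-- Both squared sides expand to `c² ± 2cp·Re ζ + p²`; with `t = Re ζ` and `(Im ζ)² = 1 - t²`,
the difference of the squares of the right and left sides is `2t(1 + t)(c + p)² ≥ 0`. -/
theorem abs_im_mul_norm_sub_le {ζ : ℂ} (hζ : ‖ζ‖ = 1) (hre : 0 ≤ ζ.re) (c p : ℝ) :
    |ζ.im| * ‖(c : ℂ) - p * ζ‖ ≤ (1 + ζ.re) * ‖(c : ℂ) + p * ζ‖ := by
  have hunit : ζ.re ^ 2 + ζ.im ^ 2 = 1 := by
    have h := Complex.sq_norm ζ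
    rw [hζ, Complex.normSq_apply] at h
    linear_combination -h
  have hnormSq (q : ℝ) : ‖(c : ℂ) + q * ζ‖ ^ 2 = c ^ 2 + 2 * c * q * ζ.re + q ^ 2 := by
    simp only [Complex.sq_norm, Complex.normSq_apply, Complex.add_re, Complex.add_im,
      Complex.mul_re, Complex.mul_im, Complex.ofReal_re, Complex.ofReal_im]
    linear_combination q ^ 2 * hunit
  have hminus : (c : ℂ) - p * ζ = c + ((-p : ℝ) : ℂ) * ζ := by push_cast; ring
  refine (pow_le_pow_iff_left₀ (by positivity) (by positivity) two_ne_zero).mp ?_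
  rw [mul_pow, mul_pow, sq_abs, hminus, hnormSq, hnormSq, show ζ.im ^ 2 = 1 - ζ.re ^ 2 by linarith]
  nlinarith [mul_nonneg (mul_nonneg hre (by linarith : (0 : ℝ) ≤ 1 + ζ.re)) (sq_nonneg (c + p))]

theorem stmt_9_general
    (α : ℝ)
    (θ : ℝ) (hθ1 : 0 < θ) (hθ2 : θ < π / 2)
    (r : ℝ)
    (z : ℂ) (hz : z = (r : ℂ) * ((Real.cos θ : ℂ) - Complex.I * (Real.sin θ : ℂ))) :
    ‖(Real.cos α : ℂ) - Complex.I * z * (Real.sin α : ℂ)‖ ≤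
      ((1 + Real.sin θ) / Real.cos θ) *
        ‖(Real.cos α : ℂ) + Complex.I * z * (Real.sin α : ℂ)‖ := by
  have hcos : 0 < Real.cos θ := Real.cos_pos_of_mem_Ioo ⟨by linarith, hθ2⟩
  have hsin : 0 < Real.sin θ := Real.sin_pos_of_pos_of_lt_pi hθ1 (by linarith [Real.pi_pos])
  set ζ : ℂ := Complex.exp ((π / 2 - θ : ℝ) * Complex.I)
  have hre : ζ.re = Real.sin θ := by rw [Complex.exp_ofReal_mul_I_re, Real.cos_pi_div_two_sub]
  have him : ζ.im = Real.cos θ := by rw [Complex.exp_ofReal_mul_I_im, Real.sin_pi_div_two_sub]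
  have hIz : Complex.I * z * (Real.sin α : ℂ) = ((r * Real.sin α : ℝ) : ℂ) * ζ := by
    apply Complex.ext <;>
      simp only [hz, hre, him, Complex.mul_re, Complex.mul_im, Complex.sub_re, Complex.sub_im,
        Complex.I_re, Complex.I_im, Complex.ofReal_re, Complex.ofReal_im] <;> ring
  have key := abs_im_mul_norm_sub_le (Complex.norm_exp_ofReal_mul_I _) (hre ▸ hsin.le)
    (Real.cos α) (r * Real.sin α)
  rw [← hIz, hre, him, abs_of_pos hcos] at key
  rw [div_mul_eq_mul_div, le_div_iff₀ hcos]
  linarith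

/-- The inequality used in the proof of Corollary 3.2 for `π/2 < α < π`:
with `z = r(cos θ − i sin θ)`, `0 < θ < π/2`,
`|cos α − iz sin α| ≤ ((1 + sin θ)/cos θ)·|cos α + iz sin α|`. -/
theorem stmt_9
    (α : ℝ) (hα1 : π / 2 < α) (hα2 : α < π)
    (θ : ℝ) (hθ1 : 0 < θ) (hθ2 : θ < π / 2)
    (r : ℝ) (hr : 0 < r)
    (z : ℂ) (hz : z = (r : ℂ) * ((Real.cos θ : ℂ) - Complex.I * (Real.sin θ : ℂ))) :
    ‖(Real.cos α : ℂ) - Complex.I * z * (Real.sin α : ℂ)‖ ≤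
      ((1 + Real.sin θ) / Real.cos θ) *
        ‖(Real.cos α : ℂ) + Complex.I * z * (Real.sin α : ℂ)‖ :=
  stmt_9_general α θ hθ1 hθ2 r z hz
end

section
/- Let θ₀ satisfy 0 < θ₀ < π, let S = {ξ ∈ ℂ : ξ ≠ 0 and |arg ξ| < θ₀}, let q : ℂ → ℂ be holomorphic on S, real-valued on (0,∞), with |q(ξ)| ≤ k(1+|ξ|)^(−γ) on S for some constants γ > 2, k > 0, and assume ∫₀^∞ t·|q(t)| dt < log 2. For each z ∈ S with Im z < 0 define uₙ(·,z), vₙ(·,z) by u₀ ≡ 1, v₀ ≡ 0 and, for n ≥ 1, uₙ(ξ,z) = (i/(2z²)) ∫₀^∞ q(ξ+s/z)·(uₙ₋₁+vₙ₋₁)(ξ+s/z,z) ds and vₙ(ξ,z) = −(i/(2z²)) ∫₀^∞ q(ξ+s/z)·e^{2is}·(uₙ₋₁+vₙ₋₁)(ξ+s/z,z) ds. Then there exists θ₁ with 0 < θ₁ ≤ θ₀ such that 1 + Σ_{n=1}^∞ (uₙ(0,z) + vₙ(0,z)) ≠ 0 for every z ≠ 0 with −θ₁ < arg z < 0. -/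
open Complex MeasureTheory Real Set


lemma aux_exp_bound (s : ℝ) (hs : 0 ≤ s) : ‖1 - Complex.exp (2 * Complex.I * s)‖ ≤ 2 * s := by
  have h1 : (2 * Complex.I * s) = ((2*s : ℝ) : ℂ) * Complex.I := by push_cast; ring
  have h2 : (1 : ℂ) - Complex.exp (((2*s : ℝ) : ℂ) * Complex.I)
      = ↑(1 - Real.cos (2*s)) + ↑(-Real.sin (2*s)) * Complex.I := by
    rw [Complex.exp_mul_I, ← Complex.ofReal_cos, ← Complex.ofReal_sin]
    push_cast; ring
  rw [h1, h2, Complex.norm_add_mul_I]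
  have hsin : Real.sin s ^ 2 ≤ s ^ 2 := by
    have h := Real.abs_sin_le_abs (x := s)
    have h1 : |Real.sin s| ^ 2 ≤ |s| ^ 2 := by nlinarith [abs_nonneg (Real.sin s), abs_nonneg s]
    rwa [_root_.sq_abs, _root_.sq_abs] at h1
  have hc2 : Real.cos (2*s) = 1 - 2 * Real.sin s ^ 2 := by
    rw [Real.cos_two_mul]; nlinarith [Real.sin_sq_add_cos_sq s]
  have harg : (1 - Real.cos (2*s))^2 + (-Real.sin (2*s))^2 ≤ (2*s)^2 := by
    nlinarith [Real.sin_sq_add_cos_sq (2*s)]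
  calc Real.sqrt ((1 - Real.cos (2*s))^2 + (-Real.sin (2*s))^2)
      ≤ Real.sqrt ((2*s)^2) := Real.sqrt_le_sqrt harg
    _ = 2*s := by rw [Real.sqrt_sq (by linarith)]

lemma aux_sum_lt_one {x : ℝ} (hx : 0 ≤ x) (hx2 : x < Real.log 2) :
    ∑' n : ℕ, x ^ (n+1) / (n+1).factorial < 1 := by
  have hsum := Real.summable_pow_div_factorial x
  have hexp : Real.exp x = ∑' n : ℕ, x ^ n / n.factorial := by
    rw [Real.exp_eq_exp_ℝ, NormedSpace.exp_eq_tsum_div]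
  have hshift := Summable.tsum_eq_zero_add hsum
  have heq : ∑' n : ℕ, x ^ (n+1) / (n+1).factorial = Real.exp x - 1 := by
    rw [hexp, hshift]; simp
  rw [heq]
  have : Real.exp x < 2 := by
    calc Real.exp x < Real.exp (Real.log 2) := Real.exp_lt_exp.2 hx2
    _ = 2 := Real.exp_log (by norm_num)
  linarith

lemma aux_summable_shift (x : ℝ) : Summable (fun n : ℕ => x ^ (n+1) / (n+1).factorial) :=
  (Real.summable_pow_div_factorial x).comp_injective (add_left_injective 1)

lemma aux_int_rpow {b c : ℝ} (hb : 1 < b) (hc : 0 < c) :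
    IntegrableOn (fun t : ℝ => (1 + c * t) ^ (-b)) (Ioi 0) := by
  have hcont : ContinuousOn (fun t : ℝ => (1 + c * t) ^ (-b)) (Ici 0) := by
    apply ContinuousOn.rpow_const (by fun_prop)
    intro t ht
    left
    nlinarith [ht.out, hc.le]
  have h1 : IntegrableOn (fun t : ℝ => (1 + c * t) ^ (-b)) (Icc 0 1) :=
    (hcont.mono Icc_subset_Ici_self).integrableOn_compact isCompact_Icc
  have h2 : IntegrableOn (fun t : ℝ => (1 + c * t) ^ (-b)) (Ioi 1) := by
    have hmaj : IntegrableOn (fun t : ℝ => c ^ (-b) * t ^ (-b)) (Ioi 1) :=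
      (integrableOn_Ioi_rpow_of_lt (by linarith) one_pos).const_mul _
    refine hmaj.mono' ((hcont.mono ?_).aestronglyMeasurable measurableSet_Ioi) ?_
    · intro t ht; exact le_of_lt (by linarith [ht.out] : (0:ℝ) < t)
    · filter_upwards [ae_restrict_mem measurableSet_Ioi] with t ht
      have ht1 : (1:ℝ) < t := ht
      have hbase : 0 < c * t := by positivity
      rw [norm_of_nonneg (Real.rpow_nonneg (by nlinarith) _), ← Real.mul_rpow hc.le (by linarith)]
      apply Real.rpow_le_rpow_of_nonpos hbase (by linarith) (by linarith)
  have : IntegrableOn (fun t : ℝ => (1 + c * t) ^ (-b)) (Ioc 0 1 ∪ Ioi 1) :=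
    (h1.mono_set Ioc_subset_Icc_self).union h2
  rwa [Ioc_union_Ioi_eq_Ioi zero_le_one] at this

lemma aux_int_t_rpow {b c : ℝ} (hb : 2 < b) (hc : 0 < c) :
    IntegrableOn (fun t : ℝ => t * (1 + c * t) ^ (-b)) (Ioi 0) := by
  have hmaj : IntegrableOn (fun t : ℝ => c⁻¹ * (1 + c * t) ^ (-(b-1))) (Ioi 0) :=
    (aux_int_rpow (by linarith) hc).const_mul _
  have hcont : ContinuousOn (fun t : ℝ => t * (1 + c * t) ^ (-b)) (Ioi 0) := by
    apply ContinuousOn.mul continuousOn_id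
    apply ContinuousOn.rpow_const (by fun_prop)
    intro t ht; left; nlinarith [ht.out, hc.le]
  refine hmaj.mono' (hcont.aestronglyMeasurable measurableSet_Ioi) ?_
  filter_upwards [ae_restrict_mem measurableSet_Ioi] with t ht
  have ht0 : (0:ℝ) < t := ht
  have hbase : (0:ℝ) < 1 + c * t := by nlinarith
  rw [norm_of_nonneg (by positivity)]
  have ht' : t ≤ c⁻¹ * (1 + c * t) := by
    rw [inv_mul_eq_div, le_div_iff₀ hc]; nlinarith
  calc t * (1 + c * t) ^ (-b) ≤ (c⁻¹ * (1 + c * t)) * (1 + c * t) ^ (-b) := by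
        apply mul_le_mul_of_nonneg_right ht' (Real.rpow_nonneg hbase.le _)
    _ = c⁻¹ * (1 + c * t) ^ (-(b-1)) := by
        rw [mul_assoc]
        congr 1
        rw [show -(b-1) = 1 + (-b) by ring, Real.rpow_add hbase, Real.rpow_one]

lemma aux_tail_facts {g : ℝ → ℝ} (hg : Continuous g) (hnn : ∀ t, 0 ≤ g t)
    (hint : IntegrableOn g (Ioi 0)) :
    (∀ y : ℝ, 0 ≤ y → (∫ t in Ioi (0:ℝ), g t) = (∫ t in (0:ℝ)..y, g t) + ∫ t in Ioi y, g t) := by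
  intro y hy
  rw [intervalIntegral.integral_of_le hy, ← MeasureTheory.setIntegral_union (Ioc_disjoint_Ioi le_rfl)
    measurableSet_Ioi (hint.mono_set Ioc_subset_Ioi_self) (hint.mono_set (Ioi_subset_Ioi hy)),
    Ioc_union_Ioi_eq_Ioi hy]

lemma aux_tail_pow {g : ℝ → ℝ} (hg : Continuous g) (hnn : ∀ t, 0 ≤ g t)
    (hint : IntegrableOn g (Ioi 0)) (n : ℕ) {x : ℝ} (hx : 0 ≤ x) :
    IntegrableOn (fun t => g t * (∫ s in Ioi t, g s) ^ n) (Ioi x) ∧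
    ∫ t in Ioi x, g t * (∫ s in Ioi t, g s) ^ n
      = (∫ t in Ioi x, g t) ^ (n+1) / (n+1) := by
  set H : ℝ → ℝ := fun y => ∫ s in Ioi y, g s with hH
  have hsplit := aux_tail_facts hg hnn hint
  have hHeq : ∀ y ∈ Ici (0:ℝ), H y = H 0 - ∫ t in (0:ℝ)..y, g t := by
    intro y hy; rw [hH]; simp only; rw [hsplit y hy]; ring
  have hFcont : Continuous fun y => ∫ t in (0:ℝ)..y, g t :=
    intervalIntegral.continuous_primitive (fun a b => hg.intervalIntegrable a b) 0
  have hHcont : ContinuousOn H (Ici 0) :=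
    (continuous_const.sub hFcont).continuousOn.congr hHeq
  have hHderiv : ∀ t : ℝ, 0 < t → HasDerivAt H (-(g t)) t := by
    intro t ht
    have hd : HasDerivAt (fun y => H 0 - ∫ s in (0:ℝ)..y, g s) (-(g t)) t := by
      have := (intervalIntegral.integral_hasDerivAt_right (hg.intervalIntegrable 0 t)
        (hg.stronglyMeasurable.stronglyMeasurableAtFilter) hg.continuousAt)
      have h := (hasDerivAt_const t (H 0)).sub this
      rw [zero_sub] at h
      exact h
    apply hd.congr_of_eventuallyEq
    filter_upwards [Ioi_mem_nhds ht] with y hy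
    exact hHeq y (mem_Ici.2 (le_of_lt (mem_Ioi.1 hy)))
  have hHtop : Filter.Tendsto H Filter.atTop (nhds 0) := by
    have h1 : Filter.Tendsto (fun y => ∫ t in (0:ℝ)..y, g t) Filter.atTop (nhds (H 0)) :=
      intervalIntegral_tendsto_integral_Ioi 0 hint Filter.tendsto_id
    have h2 : Filter.Tendsto (fun y => H 0 - ∫ t in (0:ℝ)..y, g t) Filter.atTop (nhds 0) := by
      have := (tendsto_const_nhds (x := H 0)).sub h1
      simpa using this
    apply h2.congr'
    filter_upwards [Filter.eventually_ge_atTop (0:ℝ)] with y hy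
    exact (hHeq y hy).symm
  have hHnn : ∀ y : ℝ, 0 ≤ H y := fun y => setIntegral_nonneg measurableSet_Ioi fun t _ => hnn t
  have hHmono : ∀ y : ℝ, 0 ≤ y → H y ≤ H 0 := by
    intro y hy
    exact setIntegral_mono_set hint (Filter.Eventually.of_forall fun t => hnn t)
      ((Ioi_subset_Ioi hy).eventuallyLE)
  -- the function f and its derivative
  set f : ℝ → ℝ := fun t => -(H t ^ (n+1)) / (n+1) with hf
  have hderiv : ∀ t ∈ Ioi x, HasDerivAt f (g t * H t ^ n) t := by
    intro t ht
    have h0t : 0 < t := lt_of_le_of_lt hx ht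
    have h1 : HasDerivAt (fun y => H y ^ (n+1)) (((n:ℝ)+1) * H t ^ n * (-(g t))) t := by
      have := (hHderiv t h0t).pow (n+1)
      rw [Nat.add_sub_cancel] at this
      push_cast at this
      exact this
    have h2 := (h1.neg).div_const ((n:ℝ)+1)
    have hn1 : ((n:ℝ)+1) ≠ 0 := by positivity
    refine h2.congr_deriv ?_
    rw [div_eq_iff hn1]; ring
  have hcont : ContinuousWithinAt f (Ici x) x := by
    have : ContinuousOn f (Ici x) := by
      apply ContinuousOn.div_const
      exact ((hHcont.mono (Ici_subset_Ici.2 hx)).pow (n+1)).neg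
    exact this x (self_mem_Ici)
  have hf'int : IntegrableOn (fun t => g t * H t ^ n) (Ioi x) := by
    have hmaj : IntegrableOn (fun t => H 0 ^ n * g t) (Ioi x) :=
      ((hint.mono_set (Ioi_subset_Ioi hx))).const_mul _
    refine hmaj.mono' ?_ ?_
    · have hsub : Ioi x ⊆ Ici (0:ℝ) := fun t ht => le_of_lt (lt_of_le_of_lt hx ht)
      exact (hg.continuousOn.mul ((hHcont.mono hsub).pow n)).aestronglyMeasurable measurableSet_Ioi
    · filter_upwards [ae_restrict_mem measurableSet_Ioi] with t ht
      have h0t : (0:ℝ) ≤ t := le_of_lt (lt_of_le_of_lt hx ht)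
      rw [norm_of_nonneg (mul_nonneg (hnn t) (pow_nonneg (hHnn t) n))]
      rw [mul_comm]
      exact mul_le_mul_of_nonneg_right (pow_le_pow_left₀ (hHnn t) (hHmono t h0t) n) (hnn t)
  have hftop : Filter.Tendsto f Filter.atTop (nhds 0) := by
    have := ((hHtop.pow (n+1)).neg).div_const ((n:ℝ)+1)
    simpa using this
  refine ⟨hf'int, ?_⟩
  have key := integral_Ioi_of_hasDerivAt_of_tendsto hcont hderiv hf'int hftop
  rw [key, hf]
  simp only
  push_cast
  field_simp
  rw [show (∫ t in Ioi x, g t) = H x from rfl]; ring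

lemma aux_shift_int {E : Type*} [NormedAddCommGroup E] [NormedSpace ℝ E] (F : ℝ → E) (x : ℝ) :
    (∫ s in Ioi (0:ℝ), F (x + s)) = ∫ t in Ioi x, F t := by
  have hpre : (fun s : ℝ => x + s) ⁻¹' (Ioi x) = Ioi 0 := by ext s; simp
  rw [← hpre]
  exact (measurePreserving_add_left volume x).setIntegral_preimage_emb
    (measurableEmbedding_addLeft x) F (Ioi x)

lemma aux_shift_integrable {E : Type*} [NormedAddCommGroup E] {F : ℝ → E} {x : ℝ}
    (h : IntegrableOn F (Ioi x)) : IntegrableOn (fun s => F (x + s)) (Ioi 0) := by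
  have hpre : (fun s : ℝ => x + s) ⁻¹' (Ioi x) = Ioi 0 := by ext s; simp
  have hmp := (measurePreserving_add_left volume x).restrict_preimage_emb
    (measurableEmbedding_addLeft x) (Ioi x)
  rw [hpre] at hmp
  exact (hmp.integrable_comp_emb (measurableEmbedding_addLeft x)).2 h

section AuxMain

set_option maxHeartbeats 1000000 in
/-- Corollary 3.4: in the Dirichlet case, if `∫₀^∞ t|q(t)| dt < log 2` then an entire
sector `0 < |z|`, `−θ₁ < arg z < 0` of the unphysical sheet is resonance-free:
the analytic continuation `ψ(0,z) = 1 + Σₙ(uₙ(0,z) + vₙ(0,z))` has no zeros there. -/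
theorem stmt_14
    (θ₀ γ k : ℝ) (hθ₀ : 0 < θ₀) (hθ₀' : θ₀ < π)
    (S : Set ℂ) (hS : S = {ξ : ℂ | ξ ≠ 0 ∧ |ξ.arg| < θ₀})
    (q : ℂ → ℂ) (hq : DifferentiableOn ℂ q S)
    (hqreal : ∀ x : ℝ, 0 < x → (q x).im = 0)
    (hγ : 2 < γ) (hk : 0 < k)
    (hqbound : ∀ ξ ∈ S, ‖q ξ‖ ≤ k * (1 + ‖ξ‖) ^ (-γ))
    (hqint : (∫ t in Ioi (0 : ℝ), t * ‖q (t : ℂ)‖) < Real.log 2)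
    (D : Set ℂ) (hD : D = {ξ : ℂ | 0 ≤ ξ.re ∧ (ξ ∈ S ∨ ξ = 0)})
    (u v : ℕ → ℂ → ℂ → ℂ)
    (hu0 : ∀ z ∈ S, z.im < 0 → ∀ ξ ∈ D, u 0 ξ z = 1)
    (hv0 : ∀ z ∈ S, z.im < 0 → ∀ ξ ∈ D, v 0 ξ z = 0)
    (hu : ∀ z ∈ S, z.im < 0 → ∀ n : ℕ, ∀ ξ ∈ D, u (n + 1) ξ z =
      (Complex.I / (2 * z ^ 2)) *
        ∫ s in Ioi (0 : ℝ), q (ξ + s / z) *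
          (u n (ξ + s / z) z + v n (ξ + s / z) z))
    (hv : ∀ z ∈ S, z.im < 0 → ∀ n : ℕ, ∀ ξ ∈ D, v (n + 1) ξ z =
      -(Complex.I / (2 * z ^ 2)) *
        ∫ s in Ioi (0 : ℝ), q (ξ + s / z) * Complex.exp (2 * Complex.I * s) *
          (u n (ξ + s / z) z + v n (ξ + s / z) z)) :
    ∃ θ₁ : ℝ, 0 < θ₁ ∧ θ₁ ≤ θ₀ ∧
      ∀ z : ℂ, z ≠ 0 → -θ₁ < z.arg → z.arg < 0 →
        1 + ∑' n : ℕ, (u (n + 1) 0 z + v (n + 1) 0 z) ≠ 0 := by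
  -- S is open
  have hSopen : IsOpen S := by
    rw [hS, isOpen_iff_mem_nhds]
    rintro ξ ⟨hξ0, hξarg⟩
    have hslit : ξ ∈ Complex.slitPlane := by
      rw [Complex.mem_slitPlane_iff_arg]
      constructor
      · intro hpi; rw [hpi] at hξarg; rw [_root_.abs_of_nonneg Real.pi_pos.le] at hξarg; linarith
      · exact hξ0
    have hca : ContinuousAt Complex.arg ξ := Complex.continuousAt_arg hslit
    have h1 : {ζ : ℂ | |ζ.arg| < θ₀} ∈ nhds ξ := by
      have : ContinuousAt (fun ζ : ℂ => |ζ.arg|) ξ := hca.abs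
      exact this.preimage_mem_nhds (Iio_mem_nhds hξarg)
    filter_upwards [h1, isOpen_compl_singleton.mem_nhds (by simpa using hξ0 :
      ξ ∈ ({0}ᶜ : Set ℂ))] with ζ hζ1 hζ2
    exact ⟨hζ2, hζ1⟩
  have hqc : ContinuousOn q S := hq.continuousOn
  have hqcAt : ∀ ξ ∈ S, ContinuousAt q ξ := fun ξ hξ => hqc.continuousAt (hSopen.mem_nhds hξ)
  -- membership of rays in S
  have hmemS : ∀ (r : ℝ) (w : ℂ), 0 < r → w ∈ S → (r : ℂ) * w ∈ S := by
    intro r w hr hw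
    rw [hS] at hw ⊢
    refine ⟨mul_ne_zero (by exact_mod_cast hr.ne') hw.1, ?_⟩
    rw [Complex.arg_real_mul w hr]
    exact hw.2
  have hexpS : ∀ θ : ℝ, |θ| < θ₀ → Complex.exp (θ * Complex.I) ∈ S := by
    intro θ hθ
    rw [hS]
    refine ⟨Complex.exp_ne_zero _, ?_⟩
    have habs : |θ| < π := lt_trans hθ hθ₀'
    have : Complex.arg (Complex.exp (θ * Complex.I)) = θ := by
      rw [Complex.arg_exp_mul_I]
      rw [toIocMod_eq_self]
      constructor
      · cases' abs_lt.1 habs with h1 h2; linarith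
      · cases' abs_lt.1 habs with h1 h2; nlinarith [Real.pi_pos]
    rw [this]; exact hθ
  -- integrable majorant on Ioi 0
  have hbound_int : IntegrableOn (fun t : ℝ => k * (t * (1 + 1 * t) ^ (-γ))) (Ioi 0) :=
    (aux_int_t_rpow hγ one_pos).const_mul k
  -- the function I θ
  set J : ℝ → ℝ := fun θ => ∫ t in Ioi (0:ℝ), t * ‖q (t * Complex.exp (θ * Complex.I))‖ with hJ
  have hJcont : ContinuousAt J 0 := by
    rw [hJ]
    apply MeasureTheory.continuousAt_of_dominated
      (bound := fun t : ℝ => k * (t * (1 + 1 * t) ^ (-γ)))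
    · filter_upwards [Ioo_mem_nhds (neg_neg_iff_pos.2 hθ₀) hθ₀] with θ hθ
      have habs : |θ| < θ₀ := abs_lt.2 ⟨hθ.1, hθ.2⟩
      have hmaps : MapsTo (fun t : ℝ => (t:ℂ) * Complex.exp (θ * Complex.I)) (Ioi 0) S :=
        fun t ht => hmemS t _ ht (hexpS θ habs)
      have hinner : ContinuousOn (fun t : ℝ => q ((t:ℂ) * Complex.exp (θ * Complex.I))) (Ioi 0) :=
        hqc.comp (by fun_prop) hmaps
      exact (continuousOn_id.mul hinner.norm).aestronglyMeasurable measurableSet_Ioi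
    · filter_upwards [Ioo_mem_nhds (neg_neg_iff_pos.2 hθ₀) hθ₀] with θ hθ
      have habs : |θ| < θ₀ := abs_lt.2 ⟨hθ.1, hθ.2⟩
      filter_upwards [ae_restrict_mem measurableSet_Ioi] with t ht
      have ht0 : (0:ℝ) < t := ht
      have hmem : (t:ℂ) * Complex.exp (θ * Complex.I) ∈ S := hmemS t _ ht0 (hexpS θ habs)
      have hnormeq : ‖(t:ℂ) * Complex.exp (θ * Complex.I)‖ = t := by
        rw [norm_mul, Complex.norm_exp_ofReal_mul_I,
          Complex.norm_real, Real.norm_eq_abs, _root_.abs_of_pos ht0, mul_one]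
      rw [norm_of_nonneg (by positivity)]
      calc t * ‖q ((t:ℂ) * Complex.exp (θ * Complex.I))‖
          ≤ t * (k * (1 + t) ^ (-γ)) := by
            apply mul_le_mul_of_nonneg_left _ ht0.le
            have := hqbound _ hmem
            rwa [hnormeq] at this
        _ = k * (t * (1 + 1 * t) ^ (-γ)) := by rw [one_mul]; ring
    · exact hbound_int
    · filter_upwards [ae_restrict_mem measurableSet_Ioi] with t ht
      have ht0 : (0:ℝ) < t := ht
      have htS : ((t:ℝ):ℂ) ∈ S := by
        rw [hS]
        refine ⟨by exact_mod_cast ht0.ne', ?_⟩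
        rw [Complex.arg_ofReal_of_nonneg ht0.le]
        simpa using hθ₀
      have hg : Continuous (fun θ : ℝ => (t:ℂ) * Complex.exp (θ * Complex.I)) := by fun_prop
      have hval : ((t:ℝ):ℂ) * Complex.exp ((0:ℝ) * Complex.I) = ((t:ℝ):ℂ) := by simp
      have hcq : ContinuousAt (fun θ : ℝ => q ((t:ℂ) * Complex.exp (θ * Complex.I))) 0 := by
        apply ContinuousAt.comp _ hg.continuousAt
        rw [hval]
        exact hqcAt _ htS
      exact continuousAt_const.mul hcq.norm
  have hJ0 : J 0 < Real.log 2 := by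
    have : J 0 = ∫ t in Ioi (0:ℝ), t * ‖q (t : ℂ)‖ := by
      apply setIntegral_congr_fun measurableSet_Ioi
      intro t ht; simp
    rw [this]; exact hqint
  obtain ⟨ε, hε, hball⟩ : ∃ ε > 0, ∀ θ : ℝ, |θ| < ε → J θ < Real.log 2 := by
    have hmem : J ⁻¹' (Iio (Real.log 2)) ∈ nhds 0 := hJcont (Iio_mem_nhds hJ0)
    rw [Metric.mem_nhds_iff] at hmem
    obtain ⟨ε, hε, hsub⟩ := hmem
    refine ⟨ε, hε, fun θ hθ => ?_⟩
    exact hsub (by simpa [Real.dist_eq] using hθ)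
  refine ⟨min (min ε θ₀) (π/2) / 2, by positivity, ?_, ?_⟩
  · have : min (min ε θ₀) (π/2) ≤ θ₀ := le_trans (min_le_left _ _) (min_le_right _ _)
    linarith
  intro z hz0 hzarg1 hzarg2
  set θ₁ := min (min ε θ₀) (π/2) / 2 with hθ₁def
  have hθ₁ε : θ₁ < ε := by
    have h1 : min (min ε θ₀) (π/2) ≤ ε := le_trans (min_le_left _ _) (min_le_left _ _)
    have : 0 < θ₁ := by rw [hθ₁def]; positivity
    rw [hθ₁def] at this ⊢; linarith
  have hθ₁θ₀ : θ₁ < θ₀ := by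
    have h1 : min (min ε θ₀) (π/2) ≤ θ₀ := le_trans (min_le_left _ _) (min_le_right _ _)
    have : 0 < θ₁ := by rw [hθ₁def]; positivity
    rw [hθ₁def] at this ⊢; linarith
  have hθ₁pi : θ₁ < π/2 := by
    have h1 : min (min ε θ₀) (π/2) ≤ π/2 := min_le_right _ _
    have : 0 < θ₁ := by rw [hθ₁def]; positivity
    rw [hθ₁def] at this ⊢; linarith
  have hθ₁pos : 0 < θ₁ := by rw [hθ₁def]; positivity
  clear_value θ₁
  have hzim : z.im < 0 := Complex.arg_neg_iff.1 hzarg2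
  have hzS : z ∈ S := by
    rw [hS]
    exact ⟨hz0, by rw [abs_lt]; constructor <;> [linarith; linarith]⟩
  set θ : ℝ := -z.arg with hθdef
  have hθpos : 0 < θ := by rw [hθdef]; linarith
  have hθlt : θ < θ₁ := by rw [hθdef]; linarith
  set d : ℂ := z⁻¹ with hddef
  have hd0 : d ≠ 0 := inv_ne_zero hz0
  have hargd : d.arg = θ := by
    rw [hddef, Complex.arg_inv, if_neg]
    intro hpi
    have := Real.pi_pos
    linarith [hzarg2, hpi ▸ hzarg2]
  set cz : ℝ := ‖z‖ with hczdef
  have hcz : 0 < cz := by rw [hczdef]; exact norm_pos_iff.2 hz0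
  have hdnorm : ‖d‖ = cz⁻¹ := by rw [hddef, norm_inv, hczdef]
  have hdS : d ∈ S := by
    rw [hS]
    refine ⟨hd0, ?_⟩
    rw [hargd, _root_.abs_of_pos hθpos]
    linarith
  have hxdS : ∀ x : ℝ, 0 < x → (x:ℂ) * d ∈ S := fun x hx => hmemS x d hx hdS
  have hdre : 0 < d.re := by
    have h2 : |d.arg| < π / 2 := by
      rw [hargd, _root_.abs_of_pos hθpos]; linarith
    rcases Complex.abs_arg_lt_pi_div_two_iff.1 h2 with h | h
    · exact h
    · exact absurd h hd0
  have hxdD : ∀ x : ℝ, 0 ≤ x → (x:ℂ) * d ∈ D := by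
    intro x hx
    rw [hD]
    constructor
    · have hre : ((x:ℂ) * d).re = x * d.re := by simp [Complex.mul_re]
      rw [hre]; exact mul_nonneg hx hdre.le
    · rcases eq_or_lt_of_le hx with h | h
      · right; rw [← h]; simp
      · left; exact hxdS x h
  have hray : ∀ x s : ℝ, ((x:ℂ) * d) + (s:ℂ)/z = (((x+s : ℝ)):ℂ) * d := by
    intro x s
    rw [hddef, div_eq_mul_inv]
    push_cast
    ring
  set W : ℕ → ℝ → ℂ := fun n x => u n ((x:ℂ) * d) z + v n ((x:ℂ) * d) z with hW
  set g : ℝ → ℝ := fun t => |t| * ‖q (((|t| : ℝ):ℂ) * d)‖ / cz^2 with hg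
  have hgnn : ∀ t, 0 ≤ g t := by intro t; rw [hg]; positivity
  have hgeq : ∀ t : ℝ, 0 < t → g t = t * ‖q ((t:ℂ) * d)‖ / cz^2 := by
    intro t ht; rw [hg]; simp only [_root_.abs_of_pos ht]
  have hqd : ∀ t : ℝ, 0 < t → ‖q ((t:ℂ) * d)‖ ≤ k * (1 + cz⁻¹ * t) ^ (-γ) := by
    intro t ht
    have h := hqbound _ (hxdS t ht)
    have hn : ‖(t:ℂ) * d‖ = cz⁻¹ * t := by
      rw [norm_mul, hdnorm, Complex.norm_real, Real.norm_eq_abs, _root_.abs_of_pos ht]; ring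
    rwa [hn] at h
  have hqk : ∀ t : ℝ, 0 < t → ‖q ((t:ℂ) * d)‖ ≤ k := by
    intro t ht
    refine le_trans (hqd t ht) ?_
    have h1 : (1:ℝ) ≤ 1 + cz⁻¹ * t := by nlinarith [inv_pos.2 hcz]
    have := Real.rpow_le_one_of_one_le_of_nonpos h1 (by linarith : -γ ≤ 0)
    nlinarith
  have hgcont : Continuous g := by
    rw [continuous_iff_continuousAt]
    intro t
    rcases eq_or_ne t 0 with rfl | ht
    · have h0 : g 0 = 0 := by rw [hg]; simp
      have hb : ∀ s : ℝ, g s ≤ |s| * k / cz^2 := by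
        intro s
        rcases eq_or_ne s 0 with rfl | hs
        · rw [h0]; simp
        · rw [hg]
          have h1 := hqk |s| (abs_pos.2 hs)
          have h2 : (0:ℝ) ≤ |s| := abs_nonneg s
          have h3 : (0:ℝ) < cz^2 := by positivity
          have h4 : |s| * ‖q (((|s| : ℝ):ℂ) * d)‖ ≤ |s| * k := mul_le_mul_of_nonneg_left h1 h2
          exact (div_le_div_iff_of_pos_right h3).2 h4
      rw [ContinuousAt, h0]
      apply squeeze_zero (fun s => hgnn s) hb
      have hc : Continuous (fun s : ℝ => |s| * k / cz^2) := by fun_prop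
      have := hc.tendsto 0
      simpa using this
    · have habs : 0 < |t| := abs_pos.2 ht
      have hqct : ContinuousAt (fun s : ℝ => q (((|s| : ℝ):ℂ) * d)) t := by
        have hin : ContinuousAt (fun s : ℝ => ((|s| : ℝ):ℂ) * d) t := by fun_prop
        exact ContinuousAt.comp (g := q) (f := fun s : ℝ => ((|s| : ℝ):ℂ) * d) (x := t)
          (hqcAt _ (hxdS |t| habs)) hin
      exact ((continuous_abs.continuousAt.mul hqct.norm).div_const _)
  have hgint : IntegrableOn g (Ioi 0) := by
    have hmaj : IntegrableOn (fun t : ℝ => (k/cz^2) * (t * (1 + cz⁻¹ * t) ^ (-γ))) (Ioi 0) :=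
      (aux_int_t_rpow hγ (inv_pos.2 hcz)).const_mul _
    refine hmaj.mono' (hgcont.aestronglyMeasurable.restrict) ?_
    filter_upwards [ae_restrict_mem measurableSet_Ioi] with t ht
    have ht0 : (0:ℝ) < t := ht
    rw [Real.norm_eq_abs, _root_.abs_of_nonneg (hgnn t), hgeq t ht0]
    have := hqd t ht0
    have h3 : (0:ℝ) < cz^2 := by positivity
    rw [div_le_iff₀ h3]
    have hr : (0:ℝ) ≤ (1 + cz⁻¹*t)^(-γ) := Real.rpow_nonneg (by nlinarith [inv_pos.2 hcz]) _
    calc t * ‖q ((t:ℂ) * d)‖ ≤ t * (k * (1 + cz⁻¹ * t) ^ (-γ)) :=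
          mul_le_mul_of_nonneg_left this ht0.le
      _ = k/cz^2 * (t * (1 + cz⁻¹*t)^(-γ)) * cz^2 := by field_simp
  set H : ℝ → ℝ := fun x => ∫ t in Ioi x, g t with hH
  have hHnn : ∀ y : ℝ, 0 ≤ H y := fun y => setIntegral_nonneg measurableSet_Ioi fun t _ => hgnn t
  have hHmono : ∀ y : ℝ, 0 ≤ y → H y ≤ H 0 := by
    intro y hy
    exact setIntegral_mono_set hgint (Filter.Eventually.of_forall fun t => hgnn t)
      ((Ioi_subset_Ioi hy).eventuallyLE)
  have hdecomp : d = ((cz⁻¹ : ℝ):ℂ) * Complex.exp ((θ:ℝ) * Complex.I) := by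
    have := Complex.norm_mul_exp_arg_mul_I d
    rw [hargd] at this
    rw [← this]
    congr 1
    rw [hdnorm]
  have hH0lt : H 0 < Real.log 2 := by
    have hkey : ∀ t ∈ Ioi (0:ℝ), g t
        = cz⁻¹ * ((cz⁻¹ * t) * ‖q ((((cz⁻¹ * t : ℝ)):ℂ) * Complex.exp ((θ:ℝ) * Complex.I))‖) := by
      intro t ht
      have ht0 : (0:ℝ) < t := ht
      have harg : (((cz⁻¹ * t : ℝ)):ℂ) * Complex.exp ((θ:ℝ) * Complex.I) = (t:ℂ) * d := by
        rw [hdecomp]; push_cast; ring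
      rw [hgeq t ht0, harg, div_eq_mul_inv, pow_two, mul_inv]
      ring
    have h1 : H 0 = cz⁻¹ * ∫ t in Ioi (0:ℝ),
        ((cz⁻¹ * t) * ‖q ((((cz⁻¹ * t : ℝ)):ℂ) * Complex.exp ((θ:ℝ) * Complex.I))‖) := by
      rw [hH]
      simp only
      rw [setIntegral_congr_fun measurableSet_Ioi hkey, integral_const_mul]
    have h2 := integral_comp_mul_left_Ioi
      (fun τ : ℝ => τ * ‖q ((τ:ℂ) * Complex.exp ((θ:ℝ) * Complex.I))‖) 0 (inv_pos.2 hcz)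
    simp only [mul_zero] at h2
    rw [h1]
    have h3 : (∫ t in Ioi (0:ℝ),
        ((cz⁻¹ * t) * ‖q ((((cz⁻¹ * t : ℝ)):ℂ) * Complex.exp ((θ:ℝ) * Complex.I))‖))
        = (cz⁻¹)⁻¹ • ∫ τ in Ioi (0:ℝ), τ * ‖q ((τ:ℂ) * Complex.exp ((θ:ℝ) * Complex.I))‖ := by
      rw [← h2]
    rw [h3]
    have h4 : cz⁻¹ * ((cz⁻¹)⁻¹ • ∫ τ in Ioi (0:ℝ), τ * ‖q ((τ:ℂ) * Complex.exp ((θ:ℝ) * Complex.I))‖)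
        = J θ := by
      rw [smul_eq_mul, hJ, inv_inv]
      simp only
      rw [← mul_assoc, inv_mul_cancel₀ hcz.ne', one_mul]
    rw [h4]
    apply hball
    rw [_root_.abs_of_pos hθpos]
    linarith
  -- auxiliary norm facts
  have hfacpos : ∀ m : ℕ, (0:ℝ) < m.factorial := fun m => by
    exact_mod_cast m.factorial_pos
  have hnormconst : ‖Complex.I / (2 * z^2)‖ = 1 / (2 * cz^2) := by
    rw [norm_div, norm_mul, norm_pow, Complex.norm_I, hczdef]
    norm_num
  have hexp1 : ∀ s : ℝ, ‖Complex.exp (2*Complex.I*(s:ℂ))‖ = 1 := by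
    intro s
    rw [Complex.norm_exp]
    have : (2*Complex.I*(s:ℂ)).re = 0 := by simp
    rw [this, Real.exp_zero]
  have hexp2 : ∀ s : ℝ, ‖1 - Complex.exp (2*Complex.I*(s:ℂ))‖ ≤ 2 := by
    intro s
    calc ‖1 - Complex.exp (2*Complex.I*(s:ℂ))‖ ≤ ‖(1:ℂ)‖ + ‖Complex.exp (2*Complex.I*(s:ℂ))‖ :=
          norm_sub_le _ _
      _ = 2 := by rw [hexp1, norm_one]; norm_num
  have hqray : ∀ x : ℝ, 0 ≤ x → ContinuousOn (fun s : ℝ => q ((((x+s:ℝ)):ℂ) * d)) (Ioi 0) := by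
    intro x hx s hs
    have hs0 : (0:ℝ) < s := hs
    have hin : ContinuousAt (fun s : ℝ => (((x+s:ℝ)):ℂ) * d) s := by fun_prop
    exact (ContinuousAt.comp (g := q) (f := fun s : ℝ => (((x+s:ℝ)):ℂ) * d) (x := s)
      (hqcAt _ (hxdS (x+s) (by linarith))) hin).continuousWithinAt
  have hWshift : ∀ n : ℕ, ContinuousOn (W n) (Ici 0) →
      ∀ x : ℝ, 0 ≤ x → ContinuousOn (fun s : ℝ => W n (x+s)) (Ioi 0) := by
    intro n hc x hx
    apply hc.comp (by fun_prop : Continuous fun s : ℝ => x + s).continuousOn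
    intro s hs
    have hs0 : (0:ℝ) < s := hs
    show (0:ℝ) ≤ x + s
    linarith
  have hexpcont0 : Continuous (fun s : ℝ => Complex.exp (2*Complex.I*(s:ℂ))) :=
    Complex.continuous_exp.comp (continuous_const.mul Complex.continuous_ofReal)
  have hexpcont : Continuous (fun s : ℝ => 1 - Complex.exp (2*Complex.I*(s:ℂ))) :=
    continuous_const.sub hexpcont0
  have hqb2 : ∀ x : ℝ, 0 ≤ x → ∀ s : ℝ, 0 < s →
      ‖q ((((x+s:ℝ)):ℂ) * d)‖ ≤ k * (1 + cz⁻¹ * s) ^ (-γ) := by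
    intro x hx s hs
    refine le_trans (hqd (x+s) (by linarith)) ?_
    have h1 : (0:ℝ) < 1 + cz⁻¹ * s := by nlinarith [inv_pos.2 hcz]
    have h2 : 1 + cz⁻¹ * s ≤ 1 + cz⁻¹ * (x + s) := by nlinarith [inv_pos.2 hcz]
    have := Real.rpow_le_rpow_of_nonpos h1 h2 (by linarith : -γ ≤ 0)
    nlinarith
  -- the main induction
  have main : ∀ n : ℕ, (∀ x : ℝ, 0 ≤ x → ‖W n x‖ ≤ H x ^ n / n.factorial) ∧
      ContinuousOn (W n) (Ici 0) := by
    intro n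
    induction n with
    | zero =>
      constructor
      · intro x hx
        rw [hW]
        simp only
        rw [hu0 z hzS hzim _ (hxdD x hx), hv0 z hzS hzim _ (hxdD x hx)]
        simp [Nat.factorial]
      · apply ContinuousOn.congr (continuousOn_const (c := (1:ℂ)))
        intro x hx
        rw [hW]
        simp only
        rw [hu0 z hzS hzim _ (hxdD x hx), hv0 z hzS hzim _ (hxdD x hx), add_zero]
    | succ n ih =>
      obtain ⟨ihb, ihc⟩ := ih
      have hCn : (0:ℝ) < (n.factorial : ℝ) := hfacpos n
      -- integrability of the two integrands
      have hMint : IntegrableOn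
          (fun s : ℝ => (k * (1 + cz⁻¹ * s) ^ (-γ)) * (H 0 ^ n / n.factorial)) (Ioi 0) :=
        ((aux_int_rpow (by linarith : (1:ℝ) < γ) (inv_pos.2 hcz)).const_mul k).mul_const _
      have hWb : ∀ x : ℝ, 0 ≤ x → ∀ s : ℝ, 0 < s →
          ‖W n (x+s)‖ ≤ H 0 ^ n / n.factorial := by
        intro x hx s hs
        refine le_trans (ihb (x+s) (by linarith)) ?_
        apply (div_le_div_iff_of_pos_right hCn).2
        exact pow_le_pow_left₀ (hHnn _) (hHmono (x+s) (by linarith)) n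
      have hAint : ∀ x : ℝ, 0 ≤ x → IntegrableOn
          (fun s : ℝ => q ((((x+s:ℝ)):ℂ) * d) * (W n (x+s))) (Ioi 0) := by
        intro x hx
        refine hMint.mono' (((hqray x hx).mul
          ((hWshift n ihc x hx))).aestronglyMeasurable measurableSet_Ioi) ?_
        filter_upwards [ae_restrict_mem measurableSet_Ioi] with s hs
        have hs0 : (0:ℝ) < s := hs
        rw [norm_mul]
        have h1 := hqb2 x hx s hs0
        have h2 := hWb x hx s hs0
        have h3 : (0:ℝ) ≤ k * (1 + cz⁻¹*s)^(-γ) := le_trans (norm_nonneg _) h1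
        exact mul_le_mul h1 h2 (norm_nonneg _) h3
      have hBint : ∀ x : ℝ, 0 ≤ x → IntegrableOn
          (fun s : ℝ => q ((((x+s:ℝ)):ℂ) * d) * Complex.exp (2*Complex.I*(s:ℂ)) * (W n (x+s)))
          (Ioi 0) := by
        intro x hx
        refine hMint.mono' ((((hqray x hx).mul
          hexpcont0.continuousOn).mul
          ((hWshift n ihc x hx))).aestronglyMeasurable measurableSet_Ioi) ?_
        filter_upwards [ae_restrict_mem measurableSet_Ioi] with s hs
        have hs0 : (0:ℝ) < s := hs
        rw [norm_mul, norm_mul, hexp1 s, mul_one]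
        have h1 := hqb2 x hx s hs0
        have h2 := hWb x hx s hs0
        have h3 : (0:ℝ) ≤ k * (1 + cz⁻¹*s)^(-γ) := le_trans (norm_nonneg _) h1
        exact mul_le_mul h1 h2 (norm_nonneg _) h3
      -- combined formula
      have hcomb : ∀ x : ℝ, 0 ≤ x → W (n+1) x = (Complex.I/(2*z^2)) *
          ∫ s in Ioi (0:ℝ), q ((((x+s:ℝ)):ℂ) * d) * (1 - Complex.exp (2*Complex.I*(s:ℂ)))
            * W n (x+s) := by
        intro x hx
        have hu' := hu z hzS hzim n _ (hxdD x hx)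
        have hv' := hv z hzS hzim n _ (hxdD x hx)
        rw [hW]
        simp only
        rw [hu', hv']
        simp only [hray]
        have hWn : ∀ s : ℝ, u n ((((x+s:ℝ)):ℂ) * d) z + v n ((((x+s:ℝ)):ℂ) * d) z
            = W n (x+s) := fun s => rfl
        simp only [hWn]
        rw [neg_mul, ← sub_eq_add_neg, ← mul_sub,
          ← integral_sub (hAint x hx) (hBint x hx)]
        congr 1
        apply integral_congr_ae
        filter_upwards with s
        ring
      constructor
      · -- the bound
        intro x hx
        rw [hcomb x hx, norm_mul, hnormconst]
        have htp := aux_tail_pow hgcont hgnn hgint n hx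
        have htp_int : IntegrableOn (fun t => g t * H t ^ n) (Ioi x) := htp.1
        have hm_int : IntegrableOn
            (fun s : ℝ => 2*cz^2/(n.factorial : ℝ) * (g (x+s) * H (x+s) ^ n)) (Ioi 0) :=
          (aux_shift_integrable htp_int).const_mul _
        have h1 : ‖∫ s in Ioi (0:ℝ), q ((((x+s:ℝ)):ℂ) * d)
              * (1 - Complex.exp (2*Complex.I*(s:ℂ))) * W n (x+s)‖
            ≤ ∫ s in Ioi (0:ℝ), 2*cz^2/(n.factorial : ℝ) * (g (x+s) * H (x+s) ^ n) := by
          refine le_trans (norm_integral_le_integral_norm _) ?_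
          apply integral_mono_of_nonneg (Filter.Eventually.of_forall fun s => norm_nonneg _)
            hm_int
          filter_upwards [ae_restrict_mem measurableSet_Ioi] with s hs
          have hs0 : (0:ℝ) < s := hs
          rw [norm_mul, norm_mul]
          have ha : (0:ℝ) ≤ ‖q ((((x+s:ℝ)):ℂ) * d)‖ := norm_nonneg _
          have he2 := aux_exp_bound s hs0.le
          have hw2 := ihb (x+s) (by linarith)
          have hHn : (0:ℝ) ≤ H (x+s) ^ n := pow_nonneg (hHnn _) n
          have e2 : ‖q ((((x+s:ℝ)):ℂ) * d)‖ * ‖1 - Complex.exp (2*Complex.I*(s:ℂ))‖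
                * ‖W n (x+s)‖
              ≤ ‖q ((((x+s:ℝ)):ℂ) * d)‖ * (2*s) * (H (x+s) ^ n / n.factorial) := by
            exact mul_le_mul (mul_le_mul_of_nonneg_left he2 ha) hw2 (norm_nonneg _)
              (mul_nonneg ha (by linarith))
          refine le_trans e2 ?_
          have e4 : ‖q ((((x+s:ℝ)):ℂ) * d)‖ * (2*s) * (H (x+s) ^ n / n.factorial)
              ≤ ‖q ((((x+s:ℝ)):ℂ) * d)‖ * (2*(x+s)) * (H (x+s) ^ n / n.factorial) := by
            apply mul_le_mul_of_nonneg_right _ (div_nonneg (pow_nonneg (hHnn _) n) hCn.le)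
            apply mul_le_mul_of_nonneg_left (by linarith) ha
          refine le_trans e4 (le_of_eq ?_)
          rw [hgeq (x+s) (by linarith)]
          have hcz0 : cz ≠ 0 := hcz.ne'
          have hfn : (n.factorial:ℝ) ≠ 0 := hCn.ne'
          field_simp
        have h2 : (∫ s in Ioi (0:ℝ), 2*cz^2/(n.factorial : ℝ) * (g (x+s) * H (x+s) ^ n))
            = 2*cz^2/(n.factorial : ℝ) * (H x ^ (n+1) / (n+1)) := by
          rw [integral_const_mul]
          congr 1
          have := aux_shift_int (fun t => g t * H t ^ n) x
          rw [this, htp.2]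
        rw [h2] at h1
        calc 1/(2*cz^2) * ‖∫ s in Ioi (0:ℝ), q ((((x+s:ℝ)):ℂ) * d)
              * (1 - Complex.exp (2*Complex.I*(s:ℂ))) * W n (x+s)‖
            ≤ 1/(2*cz^2) * (2*cz^2/(n.factorial : ℝ) * (H x ^ (n+1) / (n+1))) := by
              apply mul_le_mul_of_nonneg_left h1 (by positivity)
          _ = H x ^ (n+1) / (n+1).factorial := by
              rw [Nat.factorial_succ]
              have hcz0 : cz ≠ 0 := hcz.ne'
              have hfn : (n.factorial:ℝ) ≠ 0 := hCn.ne'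
              have hn1 : ((n:ℝ)+1) ≠ 0 := by positivity
              push_cast
              field_simp
      · -- continuity
        apply ContinuousOn.congr (f := fun x : ℝ => (Complex.I/(2*z^2)) *
          ∫ s in Ioi (0:ℝ), q ((((x+s:ℝ)):ℂ) * d) * (1 - Complex.exp (2*Complex.I*(s:ℂ)))
            * W n (x+s)) ?_ (fun x hx => hcomb x hx)
        apply ContinuousOn.mul continuousOn_const
        intro x₀ hx₀
        have hx₀' : (0:ℝ) ≤ x₀ := hx₀
        apply MeasureTheory.continuousWithinAt_of_dominated
          (bound := fun s : ℝ => (k * (1 + cz⁻¹ * s) ^ (-γ)) * (2 * (H 0 ^ n / n.factorial)))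
        · filter_upwards [self_mem_nhdsWithin] with x hx
          exact (((hqray x hx).mul hexpcont.continuousOn).mul
            (hWshift n ihc x hx)).aestronglyMeasurable measurableSet_Ioi
        · filter_upwards [self_mem_nhdsWithin] with x hx
          filter_upwards [ae_restrict_mem measurableSet_Ioi] with s hs
          have hs0 : (0:ℝ) < s := hs
          rw [norm_mul, norm_mul]
          have h1 := hqb2 x hx s hs0
          have h2 := hWb x hx s hs0
          have h3 : (0:ℝ) ≤ k * (1 + cz⁻¹*s)^(-γ) := le_trans (norm_nonneg _) h1
          calc ‖q ((((x+s:ℝ)):ℂ) * d)‖ * ‖1 - Complex.exp (2*Complex.I*(s:ℂ))‖ * ‖W n (x+s)‖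
              ≤ (k * (1 + cz⁻¹ * s) ^ (-γ)) * 2 * (H 0 ^ n / n.factorial) := by
                apply mul_le_mul _ h2 (norm_nonneg _) (mul_nonneg h3 (by norm_num))
                exact mul_le_mul h1 (hexp2 s) (norm_nonneg _) h3
            _ = (k * (1 + cz⁻¹ * s) ^ (-γ)) * (2 * (H 0 ^ n / n.factorial)) := by ring
        · exact ((aux_int_rpow (by linarith : (1:ℝ) < γ)
            (inv_pos.2 hcz)).const_mul k).mul_const _
        · filter_upwards [ae_restrict_mem measurableSet_Ioi] with s hs
          have hs0 : (0:ℝ) < s := hs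
          have hq_c : ContinuousWithinAt (fun x : ℝ => q ((((x+s:ℝ)):ℂ) * d)) (Ici 0) x₀ := by
            have hin : ContinuousAt (fun x : ℝ => (((x+s:ℝ)):ℂ) * d) x₀ := by fun_prop
            exact (ContinuousAt.comp (g := q) (f := fun x : ℝ => (((x+s:ℝ)):ℂ) * d) (x := x₀)
              (hqcAt _ (hxdS (x₀+s) (by nlinarith [hx₀']))) hin).continuousWithinAt
          have hW_c : ContinuousWithinAt (fun x : ℝ => W n (x+s)) (Ici 0) x₀ := by
            apply ContinuousWithinAt.comp (g := W n) (f := fun x : ℝ => x + s) (x := x₀)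
              (s := Ici 0) (t := Ici 0) (ihc (x₀+s) (mem_Ici.2 (by nlinarith [hx₀'])))
              ((by fun_prop : Continuous fun x : ℝ => x + s).continuousWithinAt)
            intro x hx
            have hxge : (0:ℝ) ≤ x := hx
            show (0:ℝ) ≤ x + s
            nlinarith
          exact (hq_c.mul continuousWithinAt_const).mul hW_c
  -- conclusion
  have hterm : ∀ n : ℕ, ‖u (n+1) 0 z + v (n+1) 0 z‖ ≤ H 0 ^ (n+1) / (n+1).factorial := by
    intro n
    have h0 : (((0:ℝ)):ℂ) * d = 0 := by simp
    have hWval : W (n+1) 0 = u (n+1) 0 z + v (n+1) 0 z := by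
      rw [hW]; simp only [h0]
    rw [← hWval]
    exact (main (n+1)).1 0 le_rfl
  have hsummable : Summable (fun n : ℕ => u (n+1) 0 z + v (n+1) 0 z) :=
    Summable.of_norm_bounded (aux_summable_shift (H 0)) hterm
  have hnorm_tsum : ‖∑' n : ℕ, (u (n+1) 0 z + v (n+1) 0 z)‖
      ≤ ∑' n : ℕ, H 0 ^ (n+1) / (n+1).factorial :=
    tsum_of_norm_bounded (aux_summable_shift (H 0)).hasSum hterm
  have hlt : (∑' n : ℕ, H 0 ^ (n+1) / (n+1).factorial) < 1 :=
    aux_sum_lt_one (hHnn 0) hH0lt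
  intro hcontra
  have hT : (∑' n : ℕ, (u (n+1) 0 z + v (n+1) 0 z)) = -1 := by
    linear_combination hcontra
  rw [hT] at hnorm_tsum
  simp only [norm_neg, norm_one] at hnorm_tsum
  linarith

end AuxMain
end
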